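/- For the scalar ODE q̇ = -q(1 - 2/(1 + e^{‖q‖² - d²})) in ℝ² with d > 0, any solution with nonzero initial condition converges to the circle of radius d: if ‖q(t₀)‖ > 0 then ‖q(t)‖ → d as t → ∞. -/

import Mathlib

open Real Filter Set Topology

/-!
The coefficient `1 - 2 / (1 + exp u)` equals `2 σ(u) - 1` for the logistic sigmoid `σ`, which is
odd, increasing and has the sign of `u`. For `u = ‖q‖² - d²` the equation gives
`u' = -2 ‖q‖² (2 σ(u) - 1)`, so `u²` is a Lyapunov function. The level `‖q‖² = m` with
`0 < m < min (‖q t₀‖², d²)` is never crossed downwards, because `‖q‖²` increases there; this keeps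
`‖q‖² ≥ m`, and then `u u' ≤ -2 m ε (2 σ(ε) - 1) < 0` whenever `|u| ≥ ε`. Hence `u²` drops below
`ε²` in finite time and stays there.
-/

theorem one_sub_two_div_one_add_exp (u : ℝ) : 1 - 2 / (1 + exp u) = 2 * sigmoid u - 1 := by
  have h : sigmoid (-u) = 1 / (1 + exp u) := by rw [sigmoid_def, neg_neg, one_div]
  rw [div_eq_mul_one_div 2, ← h, sigmoid_neg]
  ring

theorem mul_two_mul_sigmoid_sub_one_eq_abs (u : ℝ) :
    u * (2 * sigmoid u - 1) = |u| * (2 * sigmoid |u| - 1) := by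
  rcases abs_cases u with ⟨hu, -⟩ | ⟨hu, -⟩
  · rw [hu]
  · rw [hu, sigmoid_neg]
    ring

theorem mul_two_mul_sigmoid_sub_one_le {ε u : ℝ} (hε : 0 ≤ ε) (h : ε ≤ |u|) :
    ε * (2 * sigmoid ε - 1) ≤ u * (2 * sigmoid u - 1) := by
  have hσε : sigmoid 0 ≤ sigmoid ε := sigmoid_le hε
  have hσu : sigmoid ε ≤ sigmoid |u| := sigmoid_le h
  rw [sigmoid_zero] at hσε
  rw [mul_two_mul_sigmoid_sub_one_eq_abs u]
  exact mul_le_mul h (by linarith) (by linarith) (hε.trans h)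

theorem le_of_hasDerivAt_of_pos_at_level {g g' : ℝ → ℝ} {t₀ m : ℝ}
    (hg : ∀ t, HasDerivAt g (g' t) t) (h₀ : m ≤ g t₀)
    (hm : ∀ t ≥ t₀, g t = m → 0 < g' t) {t : ℝ} (ht : t₀ ≤ t) : m ≤ g t :=
  image_le_of_deriv_right_lt_deriv_boundary (f := fun _ => m) (f' := fun _ => 0) (b := t)
    continuousOn_const (fun _ _ => hasDerivWithinAt_const _ _ _) h₀ hg
    (fun s hs hgs => hm s hs.1 hgs.symm) ⟨ht, le_rfl⟩

section Lyapunov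

variable {u u' : ℝ → ℝ} {t₀ : ℝ}

theorem hasDerivAt_sq_of_hasDerivAt (hu : ∀ t, HasDerivAt u (u' t) t) (t : ℝ) :
    HasDerivAt (fun s => u s ^ 2) (2 * (u t * u' t)) t :=
  ((hu t).fun_pow 2).congr_deriv (by push_cast; ring)

theorem antitoneOn_sq_of_mul_deriv_nonpos (hu : ∀ t, HasDerivAt u (u' t) t)
    (hneg : ∀ t ≥ t₀, u t * u' t ≤ 0) : AntitoneOn (fun t => u t ^ 2) (Ici t₀) := by
  have hsq := hasDerivAt_sq_of_hasDerivAt hu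
  refine antitoneOn_of_deriv_nonpos (convex_Ici t₀)
    (fun t _ => (hsq t).continuousAt.continuousWithinAt)
    (fun t _ => (hsq t).differentiableAt.differentiableWithinAt) fun t ht => ?_
  rw [interior_Ici] at ht
  rw [(hsq t).deriv]
  linarith [hneg t ht.le]

theorem exists_abs_lt_of_mul_deriv_le_neg (hu : ∀ t, HasDerivAt u (u' t) t) {ε δ : ℝ}
    (hδ : 0 < δ) (hdecay : ∀ t ≥ t₀, ε ≤ |u t| → u t * u' t ≤ -δ) :
    ∃ T ≥ t₀, |u T| < ε := by
  by_contra! hfar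
  have hsq := hasDerivAt_sq_of_hasDerivAt hu
  set t₁ := t₀ + u t₀ ^ 2 / (2 * δ) + 1
  have ht₁ : t₀ ≤ t₁ := by
    have : 0 ≤ u t₀ ^ 2 / (2 * δ) := by positivity
    linarith
  have hdrop : u t₁ ^ 2 - u t₀ ^ 2 ≤ -(2 * δ) * (t₁ - t₀) :=
    (convex_Ici t₀).image_sub_le_mul_sub_of_deriv_le
      (fun t _ => (hsq t).continuousAt.continuousWithinAt)
      (fun t _ => (hsq t).differentiableAt.differentiableWithinAt)
      (fun t ht => by
        rw [interior_Ici] at ht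
        rw [(hsq t).deriv]
        linarith [hdecay t ht.le (hfar t ht.le)])
      t₀ self_mem_Ici t₁ ht₁ ht₁
  have hlen : 2 * δ * (t₁ - t₀) = u t₀ ^ 2 + 2 * δ := by
    simp only [t₁]
    field_simp
    ring
  nlinarith [sq_nonneg (u t₁)]

theorem tendsto_zero_of_mul_deriv_le_neg (hu : ∀ t, HasDerivAt u (u' t) t)
    (hdecay : ∀ ε > 0, ∃ δ > 0, ∀ t ≥ t₀, ε ≤ |u t| → u t * u' t ≤ -δ) :
    Tendsto u atTop (𝓝 0) := by
  have hanti : AntitoneOn (fun t => u t ^ 2) (Ici t₀) := by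
    refine antitoneOn_sq_of_mul_deriv_nonpos hu fun t ht => ?_
    rcases eq_or_ne (u t) 0 with h | h
    · simp [h]
    · obtain ⟨δ, hδ, hδu⟩ := hdecay |u t| (abs_pos.2 h)
      linarith [hδu t ht le_rfl]
  refine Metric.tendsto_atTop.2 fun ε hε => ?_
  obtain ⟨δ, hδ, hδu⟩ := hdecay ε hε
  obtain ⟨T, hT, hTε⟩ := exists_abs_lt_of_mul_deriv_le_neg hu hδ hδu
  refine ⟨T, fun t ht => ?_⟩
  have hsq : u t ^ 2 ≤ u T ^ 2 := hanti hT (hT.trans ht) ht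
  rw [Real.dist_eq, sub_zero]
  exact (sq_le_sq.1 hsq).trans_lt hTε

end Lyapunov

section Swarm

variable {F : Type*} [NormedAddCommGroup F] [InnerProductSpace ℝ F] {d : ℝ} {q : ℝ → F}

theorem hasDerivAt_norm_sq_of_swarm {t : ℝ}
    (hq : HasDerivAt q (-(2 * sigmoid (‖q t‖ ^ 2 - d ^ 2) - 1) • q t) t) :
    HasDerivAt (fun s => ‖q s‖ ^ 2)
      (-2 * ‖q t‖ ^ 2 * (2 * sigmoid (‖q t‖ ^ 2 - d ^ 2) - 1)) t := by
  convert hq.norm_sq using 1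
  rw [real_inner_smul_right, real_inner_self_eq_norm_sq]
  ring

theorem le_norm_sq_of_swarm
    (hode : ∀ t, HasDerivAt q (-(2 * sigmoid (‖q t‖ ^ 2 - d ^ 2) - 1) • q t) t)
    {t₀ m : ℝ} (hm : 0 < m) (hmd : m < d ^ 2) (h₀ : m ≤ ‖q t₀‖ ^ 2)
    {t : ℝ} (ht : t₀ ≤ t) : m ≤ ‖q t‖ ^ 2 := by
  refine le_of_hasDerivAt_of_pos_at_level (fun s => hasDerivAt_norm_sq_of_swarm (hode s)) h₀
    (fun s _ hs => ?_) ht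
  have hσ : sigmoid (m - d ^ 2) < sigmoid 0 := sigmoid_lt (sub_neg.2 hmd)
  rw [sigmoid_zero] at hσ
  rw [hs]
  nlinarith

theorem tendsto_norm_sq_of_swarm
    (hode : ∀ t, HasDerivAt q (-(2 * sigmoid (‖q t‖ ^ 2 - d ^ 2) - 1) • q t) t) (hd : 0 < d)
    {t₀ : ℝ} (h₀ : q t₀ ≠ 0) :
    Tendsto (fun t => ‖q t‖ ^ 2) atTop (𝓝 (d ^ 2)) := by
  set m := min (‖q t₀‖ ^ 2) (d ^ 2) / 2 with hm_def
  have hmin : 0 < min (‖q t₀‖ ^ 2) (d ^ 2) := by positivity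
  have hm : 0 < m := by positivity
  have hmd : m < d ^ 2 := by linarith [min_le_right (‖q t₀‖ ^ 2) (d ^ 2)]
  have hbound : ∀ t ≥ t₀, m ≤ ‖q t‖ ^ 2 := fun t ht =>
    le_norm_sq_of_swarm hode hm hmd (by linarith [min_le_left (‖q t₀‖ ^ 2) (d ^ 2)]) ht
  refine tendsto_sub_nhds_zero_iff.1 <| tendsto_zero_of_mul_deriv_le_neg (t₀ := t₀)
    (fun t => (hasDerivAt_norm_sq_of_swarm (hode t)).sub_const (d ^ 2)) fun ε hε => ?_
  have hσ : sigmoid 0 < sigmoid ε := sigmoid_lt hε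
  rw [sigmoid_zero] at hσ
  have hgain : 0 < ε * (2 * sigmoid ε - 1) := mul_pos hε (by linarith)
  refine ⟨2 * m * (ε * (2 * sigmoid ε - 1)), by positivity, fun t ht hεt => ?_⟩
  have hle := mul_two_mul_sigmoid_sub_one_le hε.le hεt
  nlinarith [hbound t ht]

end Swarm

/-- Any nonzero solution of `q̇ = -q(1 - 2/(1 + e^{‖q‖² - d²}))` in ℝ²
converges in norm to the circle of radius `d`. -/
theorem swarm_aggregation_convergence
    (d : ℝ) (hd : 0 < d)
    (q : ℝ → EuclideanSpace ℝ (Fin 2))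
    (hode : ∀ t : ℝ,
      HasDerivAt q (-(1 - 2 / (1 + Real.exp (‖q t‖ ^ 2 - d ^ 2))) • q t) t)
    (t₀ : ℝ) (h0 : 0 < ‖q t₀‖) :
    Tendsto (fun t => ‖q t‖) atTop (nhds d) := by
  simp_rw [one_sub_two_div_one_add_exp] at hode
  have hsq := (tendsto_norm_sq_of_swarm hode hd (norm_pos_iff.1 h0)).sqrt
  simpa [Real.sqrt_sq (norm_nonneg _), Real.sqrt_sq hd.le] using hsq
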